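/- For a finite group G, the graph 𝒢*(G), obtained from the power graph 𝒢(G) by deleting the identity vertex, is regular if and only if G is a cyclic group of prime power order or G is a group of prime exponent. -/

import Mathlib

/-!
Write `N[x] = {y | y ∈ ⟨x⟩ ∨ x ∈ ⟨y⟩}` for the closed neighbourhood of `x` in `𝒢(G)`; the degree
of `x ≠ 1` in `𝒢*(G)` is `|N[x]| - 2`, and `N[y] = ⟨y⟩` when `⟨y⟩` is a maximal cyclic subgroup.
Hence, if `𝒢*(G)` is regular, all maximal cyclic subgroups have the same order `m` and every
element order divides `m`.

If `m = p ^ a` then `G` is a `p`-group, in which any two elements of a cyclic subgroup are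
comparable, so `N[z] = ⟨y⟩` for every maximal `⟨y⟩ ∋ z ≠ 1`. For `a = 1` the exponent is `p`. For
`a ≥ 2`, a central `z` of order `p` then lies in every maximal cyclic subgroup, which are
therefore all equal, and `G` is cyclic.

If `m` is not a prime power, write `m = p ^ a * s` with `p` an odd prime, `p ∤ s`, `s > 1`, and
take `x ∈ ⟨g⟩` of order `p ^ a`. If `⟨g⟩` is the only maximal cyclic subgroup through `x` then
`N[x] ⊊ ⟨g⟩`. Otherwise the `s`-torsion elements commuting with `x` contain two distinct cyclic
subgroups of order `s`, hence at least `3s/2` elements; multiplying them by the `φ(p ^ a)`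
generators of `⟨x⟩` gives `|N[x]| > m` as `p ≥ 3`.

Conversely, `N[x] = G` in a cyclic `p`-group and `N[x] = ⟨x⟩` in a group of prime exponent.
-/

open Subgroup

/-- The power graph of a group: distinct `u`, `v` are adjacent iff one is a
positive integer power of the other. -/
def powerGraph (G : Type*) [Group G] : SimpleGraph G where
  Adj u v := u ≠ v ∧ ((∃ n : ℕ, 0 < n ∧ v = u ^ n) ∨ (∃ m : ℕ, 0 < m ∧ u = v ^ m))
  symm := ⟨fun u v h => ⟨h.1.symm, h.2.symm⟩⟩
  loopless := ⟨fun u h => h.1 rfl⟩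

/-- The degree of a vertex in a graph. -/
noncomputable def gDegree {V : Type*} (Γ : SimpleGraph V) (x : V) : ℕ :=
  (Γ.neighborSet x).ncard

/-- The minimum degree δ(Γ) of a graph. -/
noncomputable def gMinDegree {V : Type*} (Γ : SimpleGraph V) : ℕ :=
  sInf (Set.range (gDegree Γ))

/-- The edge-connectivity κ'(Γ): the least size of a set of edges whose deletion
disconnects the graph. -/
noncomputable def edgeConn {V : Type*} (Γ : SimpleGraph V) : ℕ :=
  sInf {k | ∃ s : Finset (Sym2 V), s.card = k ∧ ↑s ⊆ Γ.edgeSet ∧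
    ¬ (Γ.deleteEdges ↑s).Connected}

/-- The vertex connectivity κ(Γ): the least size of a set of vertices whose deletion
disconnects the graph or leaves at most one vertex. -/
noncomputable def vertConn {V : Type*} (Γ : SimpleGraph V) : ℕ :=
  sInf {k | ∃ S : Set V, S.Finite ∧ S.ncard = k ∧
    (¬ (Γ.induce Sᶜ).Preconnected ∨ Sᶜ.Subsingleton)}

/-- A nontrivial connected graph is minimally edge-connected if deleting any edge
drops the edge-connectivity by exactly one. -/
def MinimallyEdgeConnected {V : Type*} (Γ : SimpleGraph V) : Prop :=
  Nontrivial V ∧ Γ.Connected ∧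
    ∀ e ∈ Γ.edgeSet, edgeConn (Γ.deleteEdges {e}) = edgeConn Γ - 1

/-- A nontrivial connected graph is minimally connected if deleting any edge
drops the vertex connectivity by exactly one. -/
def MinimallyConnected {V : Type*} (Γ : SimpleGraph V) : Prop :=
  Nontrivial V ∧ Γ.Connected ∧
    ∀ e ∈ Γ.edgeSet, vertConn (Γ.deleteEdges {e}) = vertConn Γ - 1

/-- `S` is a separating set of `Γ` if deleting the vertices of `S` leaves a
disconnected graph. -/
def IsSeparatingSet {V : Type*} (Γ : SimpleGraph V) (S : Set V) : Prop :=
  ¬ (Γ.induce Sᶜ).Preconnected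

/-- `S` is a minimum separating set of `Γ`. -/
def IsMinSeparatingSet {V : Type*} (Γ : SimpleGraph V) (S : Set V) : Prop :=
  IsSeparatingSet Γ S ∧ ∀ T : Set V, IsSeparatingSet Γ T → S.ncard ≤ T.ncard

/-- `y` generates a maximal cyclic subgroup of `G`: the cyclic subgroup `⟨y⟩` is
not properly contained in any cyclic subgroup. -/
def IsMaxCyclicGen {G : Type*} [Group G] (y : G) : Prop :=
  ∀ z : G, zpowers y ≤ zpowers z → zpowers y = zpowers z

/-- A subgroup is maximal cyclic if it is cyclic and not properly contained in
any cyclic subgroup. -/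
def IsMaximalCyclicSubgroup {G : Type*} [Group G] (H : Subgroup G) : Prop :=
  (∃ y : G, H = zpowers y) ∧ ∀ z : G, H ≤ zpowers z → H = zpowers z

lemma Nat.exists_odd_prime_pow_mul_of_not_isPrimePow {m : ℕ} (hm : ¬IsPrimePow m) (hm0 : m ≠ 0)
    (hm1 : m ≠ 1) : ∃ p a s, p.Prime ∧ p ≠ 2 ∧ a ≠ 0 ∧ s ≠ 1 ∧ ¬p ∣ s ∧ m = p ^ a * s := by
  obtain ⟨q, hq, hqm⟩ := Nat.exists_prime_and_dvd hm1
  obtain ⟨r, hr, hrm, hrq⟩ : ∃ r, r.Prime ∧ r ∣ m ∧ r ≠ q := by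
    by_contra! h
    exact hm (isPrimePow_iff_unique_prime_dvd.mpr ⟨q, ⟨hq, hqm⟩, fun r hr => h r hr.1 hr.2⟩)
  obtain ⟨p, ℓ, hp, hℓ, hpm, hℓm, hpℓ, hp2⟩ :
      ∃ p ℓ, p.Prime ∧ ℓ.Prime ∧ p ∣ m ∧ ℓ ∣ m ∧ p ≠ ℓ ∧ p ≠ 2 := by
    by_cases hq2 : q = 2
    · exact ⟨r, q, hr, hq, hrm, hqm, hrq, hq2 ▸ hrq⟩
    · exact ⟨q, r, hq, hr, hqm, hrm, hrq.symm, hq2⟩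
  obtain ⟨a, s, hps, rfl⟩ := Nat.exists_eq_pow_mul_and_not_dvd hm0 p hp.one_lt.ne'
  refine ⟨p, a, s, hp, hp2, ?_, ?_, hps, rfl⟩
  · rintro rfl
    exact hps (by simpa using hpm)
  · rintro rfl
    rw [mul_one] at hℓm
    exact hpℓ ((Nat.prime_dvd_prime_iff_eq hℓ hp).mp (hℓ.dvd_of_dvd_pow hℓm)).symm

open Nat in
lemma Nat.prime_pow_mul_lt_add_totient_mul {p a s t : ℕ} (hp : p.Prime) (hp3 : 3 ≤ p)
    (ha : a ≠ 0) (ht : 3 * s ≤ 2 * t) : p ^ a * s < p ^ a + φ (p ^ a) * (t - 1) := by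
  obtain ⟨b, rfl⟩ := Nat.exists_eq_add_one_of_ne_zero ha
  rw [Nat.totient_prime_pow_succ hp]
  suffices h : p * s < p + (p - 1) * (t - 1) by
    have := Nat.mul_lt_mul_of_pos_left h (pow_pos hp.pos b)
    convert this using 1 <;> ring
  rcases Nat.eq_zero_or_pos s with rfl | hs
  · omega
  have htz : (3 * s : ℤ) ≤ 2 * t := by exact_mod_cast ht
  zify [show 1 ≤ t by omega, hp.one_le]
  nlinarith [mul_le_mul_of_nonneg_left htz (by omega : (0 : ℤ) ≤ p - 1)]

/-- The closed neighbourhood of `x` in the power graph `𝒢(G)`. -/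
def closedPowerNbhd {G : Type*} [Group G] (x : G) : Set G :=
  {y | y ∈ zpowers x ∨ x ∈ zpowers y}

section Group

variable {G : Type*} [Group G]

lemma ncard_zpowers (x : G) : (zpowers x : Set G).ncard = orderOf x := by
  rw [← Nat.card_coe_set_eq, SetLike.coe_sort_coe, Nat.card_zpowers]

lemma commute_of_mem_zpowers {y a b : G} (ha : a ∈ zpowers y) (hb : b ∈ zpowers y) :
    Commute a b := by
  obtain ⟨i, rfl⟩ := mem_zpowers_iff.mp ha
  obtain ⟨j, rfl⟩ := mem_zpowers_iff.mp hb
  exact Commute.zpow_zpow_self y i j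

lemma Commute.mul_pow_eq_left {u v : G} (h : Commute u v) {n s k : ℕ} (hu : u ^ n = 1)
    (hv : v ^ s = 1) (hk : k ≡ 1 [MOD n]) (hsk : s ∣ k) : (u * v) ^ k = u := by
  have huk : u ^ k = u ^ 1 :=
    pow_eq_pow_iff_modEq.mpr (hk.of_dvd (orderOf_dvd_of_pow_eq_one hu))
  rw [h.mul_pow, orderOf_dvd_iff_pow_eq_one.mp ((orderOf_dvd_of_pow_eq_one hv).trans hsk),
    mul_one, huk, pow_one]

lemma orderOf_pow_of_orderOf_eq_mul {g : G} {n s : ℕ} (hg : orderOf g = n * s) (hn : n ≠ 0) :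
    orderOf (g ^ n) = s := by
  rw [orderOf_pow_of_dvd hn (hg ▸ dvd_mul_right n s), hg, Nat.mul_div_cancel_left _ hn.bot_lt]

lemma IsPGroup.orderOf_dvd_or_dvd {p : ℕ} [Fact p.Prime] (hG : IsPGroup p G) (a b : G) :
    orderOf a ∣ orderOf b ∨ orderOf b ∣ orderOf a := by
  obtain ⟨i, hi⟩ := IsPGroup.iff_orderOf.mp hG a
  obtain ⟨j, hj⟩ := IsPGroup.iff_orderOf.mp hG b
  rw [hi, hj]
  exact (le_total i j).imp (pow_dvd_pow p) (pow_dvd_pow p)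

lemma IsMaxCyclicGen.ne_one [Nontrivial G] {y : G} (hy : IsMaxCyclicGen y) : y ≠ 1 := by
  rintro rfl
  obtain ⟨z, hz⟩ := exists_ne (1 : G)
  exact hz (by simpa [← hy z (by simp)] using mem_zpowers z)

lemma closedPowerNbhd_eq_zpowers {y : G} (hy : IsMaxCyclicGen y) :
    closedPowerNbhd y = zpowers y := by
  refine Set.Subset.antisymm (fun w hw => ?_) fun w hw => Or.inl hw
  rcases hw with hw | hw
  · exact hw
  · rw [SetLike.mem_coe, hy w (zpowers_le.mpr hw)]
    exact mem_zpowers w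

lemma orderOf_eq_of_isMaxCyclicGen {m : ℕ}
    (hreg : ∀ x : G, x ≠ 1 → (closedPowerNbhd x).ncard = m) {y : G} (hy : IsMaxCyclicGen y)
    (hy1 : y ≠ 1) : orderOf y = m := by
  rw [← hreg y hy1, closedPowerNbhd_eq_zpowers hy, ncard_zpowers]

end Group

section FiniteGroup

variable {G : Type*} [Group G] [Finite G]

lemma exists_pos_pow_eq_iff_mem_zpowers (u v : G) :
    (∃ n : ℕ, 0 < n ∧ v = u ^ n) ↔ v ∈ zpowers u := by
  refine ⟨fun ⟨n, _, hn⟩ => hn ▸ npow_mem_zpowers u n, fun h => ?_⟩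
  obtain ⟨n, rfl⟩ := mem_powers_iff_mem_zpowers.mpr h
  rcases Nat.eq_zero_or_pos n with rfl | hn
  · exact ⟨orderOf u, orderOf_pos u, by simp⟩
  · exact ⟨n, hn, rfl⟩

lemma powerGraph_adj_iff {u v : G} :
    (powerGraph G).Adj u v ↔ u ≠ v ∧ (v ∈ zpowers u ∨ u ∈ zpowers v) := by
  simp only [powerGraph, exists_pos_pow_eq_iff_mem_zpowers]

lemma gDegree_add_two (x : {g : G | g ≠ 1}) :
    gDegree ((powerGraph G).induce {g : G | g ≠ 1}) x + 2 = (closedPowerNbhd x.1).ncard := by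
  have himage : Subtype.val '' ((powerGraph G).induce {g : G | g ≠ 1}).neighborSet x =
      closedPowerNbhd x.1 \ {1, x.1} := by
    ext y
    simp only [Set.mem_image, SimpleGraph.mem_neighborSet, SimpleGraph.comap_adj,
      Function.Embedding.subtype_apply, powerGraph_adj_iff, closedPowerNbhd, Set.mem_sdiff,
      Set.mem_ofPred_eq, Set.mem_insert_iff, Set.mem_singleton_iff, Subtype.exists,
      exists_and_right, exists_eq_right]
    grind
  have hsub : ({1, x.1} : Set G) ⊆ closedPowerNbhd x.1 := by
    rintro y (rfl | rfl)
    exacts [Or.inl (one_mem _), Or.inl (mem_zpowers _)]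
  have hpair := Set.ncard_le_ncard hsub
  rw [Set.ncard_pair (Ne.symm x.2)] at hpair
  rw [gDegree, ← Set.ncard_image_of_injective _ Subtype.val_injective, himage,
    Set.ncard_sdiff hsub, Set.ncard_pair (Ne.symm x.2)]
  omega

lemma mem_zpowers_pow_div_of_pow_eq_one {y z : G} {d : ℕ} (hd : d ∣ orderOf y)
    (hz : z ∈ zpowers y) (hzd : z ^ d = 1) : z ∈ zpowers (y ^ (orderOf y / d)) := by
  obtain ⟨j, rfl⟩ : ∃ j : ℕ, y ^ j = z := mem_powers_iff_mem_zpowers.mpr hz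
  have hd0 : 0 < d := Nat.pos_of_dvd_of_pos hd (orderOf_pos y)
  have hdvd : orderOf y / d * d ∣ j * d := by
    rw [Nat.div_mul_cancel hd]
    exact orderOf_dvd_of_pow_eq_one (by rwa [← pow_mul] at hzd)
  obtain ⟨i, rfl⟩ := Nat.dvd_of_mul_dvd_mul_right hd0 hdvd
  rw [pow_mul]
  exact npow_mem_zpowers _ i

lemma mem_zpowers_of_orderOf_dvd {y u w : G} (hu : u ∈ zpowers y) (hw : w ∈ zpowers y)
    (h : orderOf w ∣ orderOf u) : w ∈ zpowers u := by
  have hd : orderOf u ∣ orderOf y := orderOf_dvd_of_mem_zpowers hu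
  have hu' : zpowers u = zpowers (y ^ (orderOf y / orderOf u)) := by
    refine Subgroup.eq_of_le_of_card_ge (zpowers_le.mpr <|
      mem_zpowers_pow_div_of_pow_eq_one hd hu (pow_orderOf_eq_one u)) ?_
    rw [Nat.card_zpowers, Nat.card_zpowers, orderOf_pow_orderOf_div (orderOf_pos y).ne' hd]
  rw [hu']
  exact mem_zpowers_pow_div_of_pow_eq_one hd hw (orderOf_dvd_iff_pow_eq_one.mp h)

lemma zpowers_eq_of_le_of_orderOf_le {y z : G} (h : zpowers y ≤ zpowers z)
    (hyz : orderOf z ≤ orderOf y) : zpowers y = zpowers z :=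
  Subgroup.eq_of_le_of_card_ge h (by rwa [Nat.card_zpowers, Nat.card_zpowers])

lemma exists_isMaxCyclicGen_mem (x : G) : ∃ y, IsMaxCyclicGen y ∧ x ∈ zpowers y := by
  obtain ⟨y, hxy, hmax⟩ := Set.exists_max_image {y : G | x ∈ zpowers y} orderOf
    (Set.toFinite _) ⟨x, mem_zpowers x⟩
  exact ⟨y, fun z hz => zpowers_eq_of_le_of_orderOf_le hz (hmax z (hz hxy)), hxy⟩

lemma three_mul_card_le_two_mul_ncard_union {H K : Subgroup G} (hHK : H ≠ K)
    (hcard : Nat.card H = Nat.card K) : 3 * Nat.card H ≤ 2 * ((H : Set G) ∪ K).ncard := by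
  have hunion := Set.ncard_union_add_ncard_inter (H : Set G) K
  have hH : (H : Set G).ncard = Nat.card H := (Nat.card_coe_set_eq _).symm
  have hK : (K : Set G).ncard = Nat.card K := (Nat.card_coe_set_eq _).symm
  have hI : ((H : Set G) ∩ K).ncard = Nat.card (H ⊓ K : Subgroup G) := by
    rw [← Subgroup.coe_inf]
    exact (Nat.card_coe_set_eq _).symm
  have hinf : Nat.card (H ⊓ K : Subgroup G) ≠ Nat.card H := fun h => hHK <|
    Subgroup.eq_of_le_of_card_ge (inf_eq_left.mp (Subgroup.eq_of_le_of_card_ge inf_le_left h.ge))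
      hcard.ge
  obtain ⟨c, hc⟩ := Subgroup.card_dvd_of_le (inf_le_left : H ⊓ K ≤ H)
  have hc2 : 2 ≤ c := by
    rcases c with _ | _ | c
    · exact absurd hc Nat.card_pos.ne'
    · rw [zero_add, mul_one] at hc
      exact absurd hc.symm hinf
    · omega
  have : 2 * Nat.card (H ⊓ K : Subgroup G) ≤ Nat.card H := hc ▸ by nlinarith
  omega

lemma mem_closedPowerNbhd_of_dvd_or_dvd {y x w : G} (hx : x ∈ zpowers y) (hw : w ∈ zpowers y)
    (h : orderOf w ∣ orderOf x ∨ orderOf x ∣ orderOf w) : w ∈ closedPowerNbhd x :=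
  h.imp (mem_zpowers_of_orderOf_dvd hx hw) (mem_zpowers_of_orderOf_dvd hw hx)

lemma ncard_closedPowerNbhd_of_isCyclic_of_isPGroup [IsCyclic G] {p : ℕ} [Fact p.Prime]
    (hG : IsPGroup p G) (x : G) : (closedPowerNbhd x).ncard = Nat.card G := by
  obtain ⟨c, hc⟩ := IsCyclic.exists_generator (α := G)
  have huniv : closedPowerNbhd x = Set.univ := Set.eq_univ_of_forall fun w =>
    mem_closedPowerNbhd_of_dvd_or_dvd (hc x) (hc w) (hG.orderOf_dvd_or_dvd w x)
  rw [huniv, Set.ncard_univ]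

lemma ncard_closedPowerNbhd_of_forall_orderOf_eq {n : ℕ} (hG : ∀ x : G, x ≠ 1 → orderOf x = n)
    {x : G} (hx : x ≠ 1) : (closedPowerNbhd x).ncard = n := by
  have hmax : IsMaxCyclicGen x := fun z hz => by
    have hz1 : z ≠ 1 := by
      rintro rfl
      exact hx (by simpa using hz (mem_zpowers x))
    exact zpowers_eq_of_le_of_orderOf_le hz (by rw [hG x hx, hG z hz1])
  rw [closedPowerNbhd_eq_zpowers hmax, ncard_zpowers, hG x hx]

lemma orderOf_dvd_of_regular [Nontrivial G] {m : ℕ}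
    (hreg : ∀ x : G, x ≠ 1 → (closedPowerNbhd x).ncard = m) (x : G) : orderOf x ∣ m := by
  obtain ⟨y, hy, hxy⟩ := exists_isMaxCyclicGen_mem x
  rw [← orderOf_eq_of_isMaxCyclicGen hreg hy hy.ne_one]
  exact orderOf_dvd_of_mem_zpowers hxy

lemma closedPowerNbhd_eq_zpowers_of_isPGroup [Nontrivial G] {m : ℕ}
    (hreg : ∀ x : G, x ≠ 1 → (closedPowerNbhd x).ncard = m) {p : ℕ} [Fact p.Prime]
    (hG : IsPGroup p G) {x y : G} (hy : IsMaxCyclicGen y) (hxy : x ∈ zpowers y) (hx : x ≠ 1) :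
    closedPowerNbhd x = zpowers y := by
  refine (Set.eq_of_subset_of_ncard_le (fun w hw => mem_closedPowerNbhd_of_dvd_or_dvd hxy hw
    (hG.orderOf_dvd_or_dvd w x)) ?_ (Set.toFinite _)).symm
  rw [hreg x hx, ncard_zpowers, orderOf_eq_of_isMaxCyclicGen hreg hy hy.ne_one]

/-- A central element `z` of order `p` lies in every maximal cyclic subgroup `⟨y⟩`: `z * y` has
the same order-`p` power as `y`, so it lies in the closed neighbourhood of that power, which is
`⟨y⟩`. -/
lemma isCyclic_of_regular_of_isPGroup [Nontrivial G] {m : ℕ}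
    (hreg : ∀ x : G, x ≠ 1 → (closedPowerNbhd x).ncard = m) {p : ℕ} [Fact p.Prime]
    (hG : IsPGroup p G) (hpm : p ^ 2 ∣ m) : IsCyclic G := by
  have hpZ : p ∣ Nat.card (center G) := by
    obtain ⟨n, hn0, hn⟩ := (hG.to_subgroup _).nontrivial_iff_card.mp hG.center_nontrivial
    exact hn ▸ dvd_pow_self p hn0.ne'
  obtain ⟨⟨z, hzZ⟩, hz⟩ := exists_prime_orderOf_dvd_card' p hpZ
  rw [Subgroup.orderOf_mk] at hz
  have hz1 : z ≠ 1 := by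
    rintro rfl
    exact (Fact.out : p.Prime).one_lt.ne' (by simpa using hz.symm)
  have hz_mem : ∀ y, IsMaxCyclicGen y → z ∈ zpowers y := by
    intro y hy
    have hym := orderOf_eq_of_isMaxCyclicGen hreg hy hy.ne_one
    have hpy : p ∣ orderOf y := hym ▸ (dvd_pow_self p two_ne_zero).trans hpm
    have hz' : orderOf (y ^ (m / p)) = p := by
      rw [← hym]
      exact orderOf_pow_orderOf_div (orderOf_pos y).ne' hpy
    have hz'1 : y ^ (m / p) ≠ 1 := by
      rintro h
      exact (Fact.out : p.Prime).one_lt.ne' (by simpa [h] using hz'.symm)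
    have hpow : (z * y) ^ (m / p) = y ^ (m / p) := by
      have hzm : z ^ (m / p) = 1 := by
        rw [← orderOf_dvd_iff_pow_eq_one, hz]
        exact Nat.dvd_div_of_mul_dvd (by rwa [← sq])
      have hcomm : Commute z y := (mem_center_iff.mp hzZ y).symm
      rw [hcomm.mul_pow, hzm, one_mul]
    have hzy : z * y ∈ zpowers y := by
      rw [← SetLike.mem_coe, ← closedPowerNbhd_eq_zpowers_of_isPGroup hreg hG hy
        (npow_mem_zpowers y _) hz'1, ← hpow]
      exact Or.inr (npow_mem_zpowers _ _)
    simpa using mul_mem hzy (inv_mem (mem_zpowers y))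
  obtain ⟨y₀, hy₀, -⟩ := exists_isMaxCyclicGen_mem z
  refine isCyclic_iff_exists_zpowers_eq_top.mpr ⟨y₀, (Subgroup.eq_top_iff' _).mpr fun w => ?_⟩
  obtain ⟨y, hy, hwy⟩ := exists_isMaxCyclicGen_mem w
  have hyy₀ : (zpowers y : Set G) = zpowers y₀ := by
    rw [← closedPowerNbhd_eq_zpowers_of_isPGroup hreg hG hy (hz_mem y hy) hz1,
      closedPowerNbhd_eq_zpowers_of_isPGroup hreg hG hy₀ (hz_mem y₀ hy₀) hz1]
  rw [← SetLike.mem_coe, ← hyy₀]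
  exact hwy

lemma ncard_setOf_mem_zpowers_orderOf_eq (x : G) :
    {u : G | u ∈ zpowers x ∧ orderOf u = orderOf x}.ncard = (orderOf x).totient := by
  classical
  have := Fintype.ofFinite (zpowers x)
  have himage : {u : G | u ∈ zpowers x ∧ orderOf u = orderOf x} =
      Subtype.val '' ((Finset.univ.filter fun a : zpowers x => orderOf a = orderOf x : Finset _) :
        Set (zpowers x)) := by
    ext u
    refine ⟨fun ⟨hu, ho⟩ => ⟨⟨u, hu⟩, by simpa [Subgroup.orderOf_mk] using ho, rfl⟩, ?_⟩
    rintro ⟨a, ha, rfl⟩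
    exact ⟨a.2, by simpa [Subgroup.orderOf_coe] using ha⟩
  rw [himage, Set.ncard_image_of_injective _ Subtype.val_injective, Set.ncard_coe_finset,
    IsCyclic.card_orderOf_eq_totient]
  rw [← Nat.card_eq_fintype_card, Nat.card_zpowers]

/-- For `u` generating `⟨x⟩` and `v ≠ 1` an `s`-torsion element commuting with `x`, the product
`u * v` lies in the closed neighbourhood of `x` but outside `⟨x⟩`, and `u = (u * v) ^ k` for one
`k` with `k ≡ 1 [MOD orderOf x]` and `k ≡ 0 [MOD s]`, so the pair is recovered from the product. -/
lemma add_totient_mul_le_ncard_closedPowerNbhd {x : G} {s : ℕ} (hs : (orderOf x).Coprime s) :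
    orderOf x + (orderOf x).totient * ({v : G | Commute x v ∧ v ^ s = 1}.ncard - 1) ≤
      (closedPowerNbhd x).ncard := by
  set V := {v : G | Commute x v ∧ v ^ s = 1}
  set Gen := {u : G | u ∈ zpowers x ∧ orderOf u = orderOf x}
  obtain ⟨k, hk1, hk0⟩ := Nat.chineseRemainder hs 1 0
  have hproj : ∀ u ∈ Gen, ∀ v ∈ V, (u * v) ^ k = u := by
    rintro u ⟨hux, hu⟩ v ⟨hxv, hv⟩
    obtain ⟨i, rfl⟩ := mem_zpowers_iff.mp hux
    exact (hxv.zpow_left i).mul_pow_eq_left (hu ▸ pow_orderOf_eq_one _) hv hk1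
      (Nat.modEq_zero_iff_dvd.mp hk0)
  set P := (fun q : G × G => q.1 * q.2) '' (Gen ×ˢ (V \ {1}))
  have hinj : Set.InjOn (fun q : G × G => q.1 * q.2) (Gen ×ˢ (V \ {1})) := by
    rintro ⟨u, v⟩ ⟨hu, hv⟩ ⟨u', v'⟩ ⟨hu', hv'⟩ (h : u * v = u' * v')
    have huu' : u = u' := by rw [← hproj u hu v hv.1, h, hproj u' hu' v' hv'.1]
    subst huu'
    rw [mul_left_cancel h]
  have hPsub : P ⊆ closedPowerNbhd x := by
    rintro _ ⟨⟨u, v⟩, ⟨hu, hv⟩, rfl⟩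
    refine Or.inr (zpowers_le.mpr ?_ (mem_zpowers_of_orderOf_dvd hu.1 (mem_zpowers x)
      (dvd_of_eq hu.2.symm)))
    simpa only [hproj u hu v hv.1] using npow_mem_zpowers (u * v) k
  have hdisj : Disjoint (zpowers x : Set G) P := by
    refine Set.disjoint_right.mpr ?_
    rintro _ ⟨⟨u, v⟩, ⟨hu, hv, hv1⟩, rfl⟩ huv
    have hvx : v ∈ zpowers x := by simpa using mul_mem (inv_mem hu.1) huv
    have hvn : v ^ orderOf x = 1 := orderOf_dvd_iff_pow_eq_one.mp (orderOf_dvd_of_mem_zpowers hvx)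
    exact hv1 (by simpa [hs.gcd_eq_one] using pow_gcd_eq_one.mpr ⟨hvn, hv.2⟩)
  calc orderOf x + (orderOf x).totient * (V.ncard - 1) = ((zpowers x : Set G) ∪ P).ncard := by
        rw [Set.ncard_union_eq hdisj, ncard_zpowers, hinj.ncard_image, Set.ncard_prod,
          ncard_setOf_mem_zpowers_orderOf_eq,
          Set.ncard_sdiff_singleton_of_mem (show (1 : G) ∈ V from ⟨Commute.one_right x, one_pow s⟩)]
    _ ≤ (closedPowerNbhd x).ncard := Set.ncard_le_ncard (Set.union_subset (fun _ => Or.inl) hPsub)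

lemma ncard_closedPowerNbhd_lt_orderOf {x g e : G}
    (hx : ∀ y, IsMaxCyclicGen y → x ∈ zpowers y → zpowers y = zpowers g) (he : e ∈ zpowers g)
    (hex : e ∉ closedPowerNbhd x) : (closedPowerNbhd x).ncard < orderOf g := by
  have hxg : x ∈ zpowers g := by
    obtain ⟨y, hy, hxy⟩ := exists_isMaxCyclicGen_mem x
    rwa [← hx y hy hxy]
  have hsub : closedPowerNbhd x ⊆ zpowers g := by
    rintro w (hw | hw)
    · exact zpowers_le.mpr hxg hw
    · obtain ⟨y, hy, hwy⟩ := exists_isMaxCyclicGen_mem w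
      rw [SetLike.mem_coe, ← hx y hy (zpowers_le.mpr hwy hw)]
      exact hwy
  rw [← ncard_zpowers]
  exact Set.ncard_lt_ncard ((Set.ssubset_iff_of_subset hsub).mpr ⟨e, he, hex⟩)

/-- The `s`-torsion parts `⟨g ^ n⟩` and `⟨y ^ n⟩` of two distinct maximal cyclic subgroups
through `x` are distinct subgroups of order `s`, since `⟨y⟩ = ⟨x * y ^ n⟩`. -/
lemma three_mul_le_two_mul_ncard_commute_pow_eq_one {x g y : G} {n s : ℕ} (hcop : n.Coprime s)
    (hx : orderOf x = n) (hg : orderOf g = n * s) (hy : orderOf y = n * s)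
    (hxg : x ∈ zpowers g) (hxy : x ∈ zpowers y) (hymax : IsMaxCyclicGen y)
    (hyg : zpowers y ≠ zpowers g) : 3 * s ≤ 2 * {v : G | Commute x v ∧ v ^ s = 1}.ncard := by
  have hn : n ≠ 0 := hx ▸ (orderOf_pos x).ne'
  have he : orderOf (g ^ n) = s := orderOf_pow_of_orderOf_eq_mul hg hn
  have he' : orderOf (y ^ n) = s := orderOf_pow_of_orderOf_eq_mul hy hn
  have hne : zpowers (g ^ n) ≠ zpowers (y ^ n) := by
    intro h
    have hxe' : Commute x (y ^ n) := commute_of_mem_zpowers hxy (npow_mem_zpowers y n)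
    have hord : orderOf (x * y ^ n) = n * s := by
      rw [hxe'.orderOf_mul_eq_mul_orderOf_of_coprime (by rwa [hx, he']), hx, he']
    have hy_eq : zpowers (x * y ^ n) = zpowers y := zpowers_eq_of_le_of_orderOf_le
      (zpowers_le.mpr (mul_mem hxy (npow_mem_zpowers y n))) (by rw [hord, hy])
    have hmem : x * y ^ n ∈ zpowers g :=
      mul_mem hxg (zpowers_le.mpr (npow_mem_zpowers g n) (h ▸ mem_zpowers (y ^ n)))
    exact hyg (hymax g (hy_eq ▸ zpowers_le.mpr hmem))
  have hsub : (zpowers (g ^ n) : Set G) ∪ zpowers (y ^ n) ⊆ {v | Commute x v ∧ v ^ s = 1} := by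
    rintro v (hv | hv)
    · exact ⟨commute_of_mem_zpowers hxg (zpowers_le.mpr (npow_mem_zpowers g n) hv),
        orderOf_dvd_iff_pow_eq_one.mp (he ▸ orderOf_dvd_of_mem_zpowers hv)⟩
    · exact ⟨commute_of_mem_zpowers hxy (zpowers_le.mpr (npow_mem_zpowers y n) hv),
        orderOf_dvd_iff_pow_eq_one.mp (he' ▸ orderOf_dvd_of_mem_zpowers hv)⟩
  calc 3 * s = 3 * Nat.card (zpowers (g ^ n)) := by rw [Nat.card_zpowers, he]
    _ ≤ 2 * ((zpowers (g ^ n) : Set G) ∪ zpowers (y ^ n)).ncard :=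
      three_mul_card_le_two_mul_ncard_union hne
        (by rw [Nat.card_zpowers, Nat.card_zpowers, he, he'])
    _ ≤ _ := Nat.mul_le_mul_left 2 (Set.ncard_le_ncard hsub)

lemma false_of_regular_of_not_isPrimePow [Nontrivial G] {m : ℕ}
    (hreg : ∀ x : G, x ≠ 1 → (closedPowerNbhd x).ncard = m) (hm : ¬IsPrimePow m) : False := by
  obtain ⟨g, hg, -⟩ := exists_isMaxCyclicGen_mem (1 : G)
  have hgm := orderOf_eq_of_isMaxCyclicGen hreg hg hg.ne_one
  obtain ⟨p, a, s, hp, hp2, ha, hs1, hps, rfl⟩ := Nat.exists_odd_prime_pow_mul_of_not_isPrimePow hm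
    (hgm ▸ (orderOf_pos g).ne') (hgm ▸ mt orderOf_eq_one_iff.mp hg.ne_one)
  have hcop : (p ^ a).Coprime s := Nat.Coprime.pow_left _ (hp.coprime_iff_not_dvd.mpr hps)
  have hpa1 : 1 < p ^ a := Nat.one_lt_pow ha hp.one_lt
  have hs0 : s ≠ 0 := by
    rintro rfl
    exact hps (dvd_zero p)
  have hx : orderOf (g ^ s) = p ^ a := orderOf_pow_of_orderOf_eq_mul (hgm.trans (mul_comm _ _)) hs0
  have hx1 : g ^ s ≠ 1 := fun h => by simp [h] at hx; omega
  by_cases hA : ∀ y, IsMaxCyclicGen y → g ^ s ∈ zpowers y → zpowers y = zpowers g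
  · have he : orderOf (g ^ p ^ a) = s := orderOf_pow_of_orderOf_eq_mul hgm (by omega)
    have hex : g ^ p ^ a ∉ closedPowerNbhd (g ^ s) := by
      rintro (h | h) <;> have h' := orderOf_dvd_of_mem_zpowers h <;> rw [he, hx] at h'
      · exact hs1 (Nat.Coprime.eq_one_of_dvd hcop.symm h')
      · exact hpa1.ne' (Nat.Coprime.eq_one_of_dvd hcop h')
    have hlt := ncard_closedPowerNbhd_lt_orderOf hA (npow_mem_zpowers g (p ^ a)) hex
    rw [hreg _ hx1, hgm] at hlt
    exact lt_irrefl _ hlt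
  · push Not at hA
    obtain ⟨y, hy, hxy, hyg⟩ := hA
    have hV := three_mul_le_two_mul_ncard_commute_pow_eq_one hcop hx hgm
      (orderOf_eq_of_isMaxCyclicGen hreg hy hy.ne_one) (npow_mem_zpowers g s) hxy hy hyg
    have hN := add_totient_mul_le_ncard_closedPowerNbhd (hx ▸ hcop)
    rw [hreg _ hx1, hx] at hN
    have hp3 : 3 ≤ p := by
      have := hp.two_le
      omega
    exact (Nat.prime_pow_mul_lt_add_totient_mul hp hp3 ha hV).not_ge hN

end FiniteGroup

/-- The proper power graph `𝒢*(G)` (the power graph with the identity removed) of a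
finite group is regular iff `G` is cyclic of prime power order or of prime exponent. -/
theorem stmt_9 (G : Type*) [Group G] [Fintype G] :
    (∀ u v : ↥{g : G | g ≠ 1},
        gDegree ((powerGraph G).induce {g : G | g ≠ 1}) u =
          gDegree ((powerGraph G).induce {g : G | g ≠ 1}) v) ↔
      ((IsCyclic G ∧ ∃ p k : ℕ, p.Prime ∧ Nat.card G = p ^ k) ∨
        ∃ p : ℕ, p.Prime ∧ ∀ x : G, x ≠ 1 → orderOf x = p) := by
  constructor
  · intro hreg
    rcases subsingleton_or_nontrivial G with _ | _
    · exact Or.inl ⟨isCyclic_of_subsingleton, 2, 0, Nat.prime_two, Nat.card_unique⟩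
    obtain ⟨g, hg, -⟩ := exists_isMaxCyclicGen_mem (1 : G)
    have hreg' : ∀ x : G, x ≠ 1 → (closedPowerNbhd x).ncard = orderOf g := fun x hx => by
      rw [← ncard_zpowers, ← closedPowerNbhd_eq_zpowers hg, ← gDegree_add_two ⟨x, hx⟩,
        ← gDegree_add_two ⟨g, hg.ne_one⟩, hreg]
    by_cases hm : IsPrimePow (orderOf g)
    · obtain ⟨p, a, hp, ha, hpa⟩ := hm
      have hp : p.Prime := Nat.prime_iff.mpr hp
      have := Fact.mk hp
      have hdvd : ∀ x : G, orderOf x ∣ p ^ a := fun x => hpa ▸ orderOf_dvd_of_regular hreg' x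
      rcases Nat.lt_or_ge a 2 with ha2 | ha2
      · obtain rfl : a = 1 := by omega
        refine Or.inr ⟨p, hp, fun x hx => ?_⟩
        exact ((Nat.dvd_prime hp).mp (pow_one p ▸ hdvd x)).resolve_left
          (mt orderOf_eq_one_iff.mp hx)
      · have hG : IsPGroup p G := IsPGroup.iff_orderOf.mpr fun x =>
          ((Nat.dvd_prime_pow hp).mp (hdvd x)).imp fun _ h => h.2
        exact Or.inl ⟨isCyclic_of_regular_of_isPGroup hreg' hG (hpa ▸ pow_dvd_pow p ha2), p,
          hG.exists_card_eq.imp fun _ hk => ⟨hp, hk⟩⟩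
    · exact (false_of_regular_of_not_isPrimePow hreg' hm).elim
  · rintro (⟨hc, p, k, hp, hcard⟩ | ⟨p, hp, hexp⟩) u v <;>
      rw [← add_left_inj 2, gDegree_add_two, gDegree_add_two]
    · have := Fact.mk hp
      rw [ncard_closedPowerNbhd_of_isCyclic_of_isPGroup (IsPGroup.of_card hcard),
        ncard_closedPowerNbhd_of_isCyclic_of_isPGroup (IsPGroup.of_card hcard)]
    · rw [ncard_closedPowerNbhd_of_forall_orderOf_eq hexp u.2,
        ncard_closedPowerNbhd_of_forall_orderOf_eq hexp v.2]
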